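/- arXiv:math/0507266 — 4 statements merged into one kernel-verified Lean document; each statement's English description precedes it below -/
import Mathlib

section
/- Let Γ be a PTFA group and ψ: Γ → Z an epimorphism with kernel Γ^ψ. A choice of splitting ξ: Z → Γ induces a ring isomorphism between the localization ZΓ(ZΓ^ψ − {0})^{−1} and the skew Laurent polynomial ring K_{Γ^ψ}[t^{±1}], where K_{Γ^ψ} is the right field of fractions of ZΓ^ψ and at = t(ξ(1)^{−1} a ξ(1)) for a ∈ K_{Γ^ψ}. -/
/-!
Via `ξ`, every `γ ∈ Γ` is uniquely `ξ(n) k` with `k ∈ Γ^ψ`, so `ℤΓ` is free as a right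
`ℤΓ^ψ`-module on the `ξ(n)`, and `k ↦ e k`, `ξ(n) ↦ tⁿ` is a ring map `ℤΓ → K[t^{±1}]` because
`σK` is conjugation by `ξ(1)`. Uniqueness of Laurent representations makes it injective, and
it inverts `ℤΓ^ψ − {0}`, so it extends along the right ring of fractions `L`. The extension is
injective because every element of `L` is a fraction `j a (j s)⁻¹`, and surjective because its
image contains `ι (e a (e s)⁻¹)`, i.e. all of `ι K`, and every `tⁿ`.
-/

/-- A group `G` is poly-torsion-free-abelian (PTFA) if it has a normal series of finite
length whose successive quotients are torsion-free abelian. -/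
def IsPTFA (G : Type*) [Group G] : Prop :=
  ∃ (n : ℕ) (s : Fin (n + 1) → Subgroup G),
    s 0 = ⊥ ∧ s (Fin.last n) = ⊤ ∧
    (∀ i : Fin n, s i.castSucc ≤ s i.succ) ∧
    (∀ i : Fin n, ∀ x ∈ s i.succ, ∀ y ∈ s i.castSucc, x * y * x⁻¹ ∈ s i.castSucc) ∧
    (∀ i : Fin n, ∀ x ∈ s i.succ, ∀ y ∈ s i.succ, x * y * x⁻¹ * y⁻¹ ∈ s i.castSucc) ∧
    (∀ i : Fin n, ∀ x ∈ s i.succ, ∀ m : ℕ, 0 < m → x ^ m ∈ s i.castSucc → x ∈ s i.castSucc)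

structure IsRightRingOfFractions {R L : Type*} [Ring R] [Ring L] (S : Submonoid R)
    (j : R →+* L) : Prop where
  injective : Function.Injective j
  isUnit : ∀ s ∈ S, IsUnit (j s)
  exists_mul_eq : ∀ x : L, ∃ a, ∃ s ∈ S, x * j s = j a

namespace IsRightRingOfFractions

variable {R L L' : Type*} [Ring R] [Ring L] [Ring L'] {S : Submonoid R} {j : R →+* L}
  (hj : IsRightRingOfFractions S j)
include hj

theorem exists_mul_eq_mul {s : R} (hs : s ∈ S) (a : R) : ∃ b, ∃ c ∈ S, a * c = s * b := by
  obtain ⟨b, c, hc, h⟩ := hj.exists_mul_eq (↑(hj.isUnit s hs).unit⁻¹ * j a)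
  refine ⟨b, c, hc, hj.injective ?_⟩
  rw [map_mul, map_mul, ← h, ← mul_assoc, ← mul_assoc, IsUnit.mul_val_inv, one_mul]

noncomputable def num (x : L) : R := (hj.exists_mul_eq x).choose

noncomputable def den (x : L) : R := (hj.exists_mul_eq x).choose_spec.choose

theorem den_mem (x : L) : hj.den x ∈ S := (hj.exists_mul_eq x).choose_spec.choose_spec.1

theorem mul_den (x : L) : x * j (hj.den x) = j (hj.num x) :=
  (hj.exists_mul_eq x).choose_spec.choose_spec.2

variable (F : R →+* L')

noncomputable def liftFun (x : L) : L' := F (hj.num x) * Ring.inverse (F (hj.den x))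

variable (hF : ∀ s ∈ S, IsUnit (F s))
include hF

/-- Well-definedness: the solution `y` of `y * F s = F a` does not depend on the fraction
`x * j s = j a` chosen for `x`. -/
theorem mul_eq_of_mul_eq {x : L} {a₁ a₂ s₁ s₂ : R} (hs₁ : s₁ ∈ S)
    (h₁ : x * j s₁ = j a₁) (h₂ : x * j s₂ = j a₂) {y : L'} (hy : y * F s₁ = F a₁) :
    y * F s₂ = F a₂ := by
  obtain ⟨b, c, hc, hbc⟩ := hj.exists_mul_eq_mul hs₁ s₂
  have hab : a₁ * b = a₂ * c := hj.injective <| by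
    rw [map_mul, map_mul, ← h₁, ← h₂, mul_assoc, mul_assoc, ← map_mul, ← map_mul, hbc]
  refine (hF c hc).mul_left_inj.mp ?_
  rw [mul_assoc, ← map_mul, hbc, map_mul, ← mul_assoc, hy, ← map_mul, hab, map_mul]

theorem liftFun_mul_eq {x : L} {a s : R} (h : x * j s = j a) :
    hj.liftFun F x * F s = F a :=
  hj.mul_eq_of_mul_eq F hF (hj.den_mem x) (hj.mul_den x) h
    (Ring.inverse_mul_cancel_right _ _ (hF _ (hj.den_mem x)))

theorem liftFun_eq {x : L} {a s : R} (hs : s ∈ S) (h : x * j s = j a) {y : L'}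
    (hy : y * F s = F a) : hj.liftFun F x = y :=
  (hF s hs).mul_left_inj.mp ((hj.liftFun_mul_eq F hF h).trans hy.symm)

theorem liftFun_add (x y : L) : hj.liftFun F (x + y) = hj.liftFun F x + hj.liftFun F y := by
  obtain ⟨a₁, s₁, hs₁, hx⟩ := hj.exists_mul_eq x
  obtain ⟨a₂, s₂, hs₂, hy⟩ := hj.exists_mul_eq y
  obtain ⟨b, c, hc, hbc⟩ := hj.exists_mul_eq_mul hs₁ s₂
  refine hj.liftFun_eq F hF (S.mul_mem hs₂ hc) (a := a₁ * b + a₂ * c) ?_ ?_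
  · rw [add_mul, map_add, map_mul j a₁, map_mul j a₂, ← hx, ← hy, mul_assoc, mul_assoc,
      ← map_mul, ← map_mul, hbc]
  · rw [add_mul, map_add, map_mul F a₁, map_mul F a₂, ← hj.liftFun_mul_eq F hF hx,
      ← hj.liftFun_mul_eq F hF hy, mul_assoc, mul_assoc, ← map_mul, ← map_mul, hbc]

theorem liftFun_mul (x y : L) : hj.liftFun F (x * y) = hj.liftFun F x * hj.liftFun F y := by
  obtain ⟨a₁, s₁, hs₁, hx⟩ := hj.exists_mul_eq x
  obtain ⟨a₂, s₂, hs₂, hy⟩ := hj.exists_mul_eq y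
  obtain ⟨b, c, hc, hbc⟩ := hj.exists_mul_eq_mul hs₁ a₂
  refine hj.liftFun_eq F hF (S.mul_mem hs₂ hc) (a := a₁ * b) ?_ ?_
  · rw [map_mul, map_mul, ← hx, mul_assoc, ← mul_assoc y, hy, ← map_mul, hbc, map_mul,
      ← mul_assoc]
  · rw [map_mul, map_mul, ← hj.liftFun_mul_eq F hF hx, mul_assoc, ← mul_assoc _ (F s₂),
      hj.liftFun_mul_eq F hF hy, ← map_mul, hbc, map_mul, ← mul_assoc]

theorem liftFun_map (a : R) : hj.liftFun F (j a) = F a :=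
  hj.liftFun_eq F hF S.one_mem (a := a) (by rw [map_one, mul_one]) (by rw [map_one, mul_one])

noncomputable def lift : L →+* L' where
  toFun := hj.liftFun F
  map_one' := by rw [← map_one j, hj.liftFun_map F hF, map_one]
  map_mul' := hj.liftFun_mul F hF
  map_zero' := by rw [← map_zero j, hj.liftFun_map F hF, map_zero]
  map_add' := hj.liftFun_add F hF

theorem lift_apply_map (a : R) : hj.lift F hF (j a) = F a := hj.liftFun_map F hF a

theorem lift_mul_eq {x : L} {a s : R} (h : x * j s = j a) :
    hj.lift F hF x * F s = F a :=
  hj.liftFun_mul_eq F hF h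

theorem lift_injective (hFinj : Function.Injective F) : Function.Injective (hj.lift F hF) := by
  refine (injective_iff_map_eq_zero _).mpr fun x hx => ?_
  obtain ⟨a, s, hs, h⟩ := hj.exists_mul_eq x
  have ha : a = 0 := hFinj <| by rw [← hj.lift_mul_eq F hF h, hx, zero_mul, map_zero]
  rwa [ha, map_zero, (hj.isUnit s hs).mul_left_eq_zero] at h

theorem exists_lift_mul_eq (a : R) {s : R} (hs : s ∈ S) : ∃ x, hj.lift F hF x * F s = F a :=
  ⟨j a * ↑(hj.isUnit s hs).unit⁻¹,
    hj.lift_mul_eq F hF (by rw [mul_assoc, IsUnit.val_inv_mul, mul_one])⟩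

end IsRightRingOfFractions

theorem isRightRingOfFractions_of_eq_mul_inv {A R L K : Type*} [Ring A] [Ring R] [Ring L]
    [DivisionRing K] {e : A →+* K} (he : Function.Injective e) {i : A →+* R} {j : R →+* L}
    (hj : Function.Injective j) (hjunit : ∀ s, s ≠ 0 → IsUnit (j (i s)))
    (hjdenom : ∀ x : L, ∃ (a : R) (s : A) (_ : s ≠ 0) (u : Lˣ), (u : L) = j (i s) ∧
      x = j a * ↑u⁻¹) :
    IsRightRingOfFractions (((IsUnit.submonoid K).comap e).map i) j where
  injective := hj
  isUnit := by
    rintro _ ⟨s, hs, rfl⟩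
    have hes : IsUnit (e s) := hs
    exact hjunit s (by rintro rfl; simp at hes)
  exists_mul_eq x := by
    obtain ⟨a, s, hs, u, hu, rfl⟩ := hjdenom x
    refine ⟨a, i s, ⟨s, isUnit_iff_ne_zero.mpr ((map_ne_zero_iff e he).mpr hs), rfl⟩, ?_⟩
    rw [← hu, Units.inv_mul_cancel_right]

section SplitExtension

variable {Γ Q H : Type*} [Group Γ] [Group Q] [Group H] {ψ : Γ →* Q} {ξ : Q →* Γ}
  (hξ : ∀ q, ψ (ξ q) = q)

def kerPart (γ : Γ) : ψ.ker :=
  ⟨(ξ (ψ γ))⁻¹ * γ, by simp [MonoidHom.mem_ker, hξ]⟩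

@[simp] theorem coe_kerPart (γ : Γ) : (kerPart hξ γ : Γ) = (ξ (ψ γ))⁻¹ * γ := rfl

theorem kerPart_coe (k : ψ.ker) : kerPart hξ (k : Γ) = k :=
  Subtype.ext (by simp [(MonoidHom.mem_ker).mp k.2])

theorem kerPart_section (q : Q) : kerPart hξ (ξ q) = 1 :=
  Subtype.ext (by simp [hξ])

theorem kerPart_mul (γ₁ γ₂ : Γ) : kerPart hξ (γ₁ * γ₂) =
    (MulAut.conjNormal (ξ (ψ γ₂)))⁻¹ (kerPart hξ γ₁) * kerPart hξ γ₂ :=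
  Subtype.ext (by simp [mul_assoc])

/-- `ξ` makes `Γ` the semidirect product `ψ.ker ⋊ Q`, so homomorphisms on `ψ.ker` and on `Q`
that intertwine the conjugation actions glue to a homomorphism on `Γ`. -/
def splitLift (χ : ψ.ker →* H) (η : Q →* H)
    (hχη : ∀ q k, χ ((MulAut.conjNormal (ξ q))⁻¹ k) = (η q)⁻¹ * χ k * η q) :
    Γ →* H where
  toFun γ := η (ψ γ) * χ (kerPart hξ γ)
  map_one' := by rw [← map_one ξ, kerPart_section, hξ, map_one, map_one, one_mul]
  map_mul' γ₁ γ₂ := by simp only [map_mul, kerPart_mul, hχη]; group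

variable {χ : ψ.ker →* H} {η : Q →* H}
  (hχη : ∀ q k, χ ((MulAut.conjNormal (ξ q))⁻¹ k) = (η q)⁻¹ * χ k * η q)

theorem splitLift_apply (γ : Γ) :
    splitLift hξ χ η hχη γ = η (ψ γ) * χ (kerPart hξ γ) :=
  rfl

theorem splitLift_coe (k : ψ.ker) : splitLift hξ χ η hχη k = χ k := by
  rw [splitLift_apply, kerPart_coe, (MonoidHom.mem_ker).mp k.2, map_one, one_mul]

theorem splitLift_section (q : Q) : splitLift hξ χ η hχη (ξ q) = η q := by
  rw [splitLift_apply, kerPart_section, hξ, map_one, mul_one]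

def splitEquiv : Γ ≃ Q × ψ.ker where
  toFun γ := (ψ γ, kerPart hξ γ)
  invFun p := ξ p.1 * p.2
  left_inv γ := by simp
  right_inv p := by ext <;> simp [hξ, (MonoidHom.mem_ker).mp p.2.2]

end SplitExtension

theorem map_conjNormal_zpow_inv {Γ H : Type*} [Group Γ] [Group H] {N : Subgroup Γ} [N.Normal]
    {χ : N →* H} {g : Γ} {u : H}
    (h : ∀ k, χ ((MulAut.conjNormal g)⁻¹ k) = u⁻¹ * χ k * u) (n : ℤ) (k : N) :
    χ ((MulAut.conjNormal (g ^ n))⁻¹ k) = (u ^ n)⁻¹ * χ k * u ^ n := by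
  induction n using Int.induction_on generalizing k with
  | zero => simp
  | succ n ih =>
    rw [zpow_add_one, map_mul, mul_inv_rev, MulAut.mul_apply, h, ih]
    group
  | pred n ih =>
    have h' : ∀ k, χ (MulAut.conjNormal g k) = u * χ k * u⁻¹ := fun k => by
      have hk := h (MulAut.conjNormal g k)
      rw [MulAut.inv_apply_self] at hk
      rw [hk]
      group
    rw [zpow_sub_one, map_mul, mul_inv_rev, map_inv, inv_inv, MulAut.mul_apply, h', ih]
    group

section SkewLaurent

variable {Γ : Type*} [Group Γ] {ψ : Γ →* Multiplicative ℤ} {ξ : Multiplicative ℤ →* Γ}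
  (hξ : ∀ m, ψ (ξ m) = m) {K : Type*} [Ring K] (e : MonoidAlgebra ℤ ψ.ker →+* K)
  {L' : Type*} [Ring L'] (ι : K →+* L') (t : L'ˣ)

noncomputable def kerUnits : ψ.ker →* L'ˣ :=
  ((ι.comp e : MonoidAlgebra ℤ ψ.ker →* L').comp (MonoidAlgebra.of ℤ ψ.ker)).toHomUnits

@[simp] theorem coe_kerUnits (k : ψ.ker) :
    (kerUnits e ι k : L') = ι (e (MonoidAlgebra.of ℤ ψ.ker k)) := rfl

/-- Writing `γ = ξ n * k` with `k ∈ ψ.ker` makes `ℤΓ` free over `ℤ[ψ.ker]` on the `ξ n`;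
this sends `a` to its coordinates `n ↦ e (a_n)` in that basis. -/
noncomputable def laurentCoeff : MonoidAlgebra ℤ Γ →+ (ℤ →₀ K) :=
  (Finsupp.mapRange.addMonoidHom
      (e.toAddMonoidHom.comp MonoidAlgebra.coeffAddEquiv.symm.toAddMonoidHom)).comp
    (MonoidAlgebra.coeffAddEquiv.trans <| (Finsupp.domCongr <| (splitEquiv hξ).trans <|
      Multiplicative.toAdd.prodCongr (Equiv.refl _)).trans Finsupp.curryAddEquiv).toAddMonoidHom

variable {e} in
theorem laurentCoeff_injective (he : Function.Injective e) :
    Function.Injective (laurentCoeff hξ e) :=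
  (Finsupp.mapRange_injective _ (map_zero _) fun _ _ h =>
    MonoidAlgebra.ofCoeff_injective (he h)).comp (AddEquiv.injective _)

variable {e ι t} in
theorem kerUnits_conjNormal_inv {σ : K → K}
    (hσ : ∀ h h' : ψ.ker, (h' : Γ) = (ξ (.ofAdd 1))⁻¹ * h * ξ (.ofAdd 1) →
      σ (e (MonoidAlgebra.of ℤ ψ.ker h)) = e (MonoidAlgebra.of ℤ ψ.ker h'))
    (hcomm : ∀ a, ι a * t = t * ι (σ a)) (k : ψ.ker) :
    kerUnits e ι ((MulAut.conjNormal (ξ (.ofAdd 1)))⁻¹ k) = t⁻¹ * kerUnits e ι k * t :=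
  Units.ext <| by
    rw [coe_kerUnits, ← hσ k _ (MulAut.conjNormal_inv_apply _ _), Units.val_mul, Units.val_mul,
      coe_kerUnits, mul_assoc, hcomm, Units.inv_mul_cancel_left]

variable {e ι t} (hχ : ∀ k,
  kerUnits e ι ((MulAut.conjNormal (ξ (.ofAdd 1)))⁻¹ k) = t⁻¹ * kerUnits e ι k * t)

include hχ in
theorem kerUnits_conj (q : Multiplicative ℤ) (k : ψ.ker) :
    kerUnits e ι ((MulAut.conjNormal (ξ q))⁻¹ k) =
      (zpowersHom L'ˣ t q)⁻¹ * kerUnits e ι k * zpowersHom L'ˣ t q := by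
  have hq : q = Multiplicative.ofAdd 1 ^ q.toAdd := by
    rw [← ofAdd_zsmul, smul_eq_mul, mul_one, ofAdd_toAdd]
  conv_lhs => rw [hq, map_zpow, map_conjNormal_zpow_inv hχ]
  rw [zpowersHom_apply]

noncomputable def laurentHom : MonoidAlgebra ℤ Γ →+* L' :=
  MonoidAlgebra.lift ℤ L' Γ <| (Units.coeHom L').comp <|
    splitLift hξ (kerUnits e ι) (zpowersHom L'ˣ t) (kerUnits_conj hχ)

theorem laurentHom_single (γ : Γ) (z : ℤ) :
    laurentHom hξ hχ (MonoidAlgebra.single γ z) =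
      ↑(t ^ (ψ γ).toAdd) * ι (e (MonoidAlgebra.single (kerPart hξ γ) z)) := by
  have hz : MonoidAlgebra.single (kerPart hξ γ) z =
      z • MonoidAlgebra.of ℤ _ (kerPart hξ γ) := by
    rw [MonoidAlgebra.of_apply, MonoidAlgebra.smul_single', mul_one]
  rw [laurentHom, AlgHom.coe_toRingHom, MonoidAlgebra.lift_single, MonoidHom.comp_apply,
    splitLift_apply, hz, map_zsmul e, map_zsmul ι, mul_smul_comm]
  rfl

theorem laurentHom_of_section (n : ℤ) :
    laurentHom hξ hχ (MonoidAlgebra.of ℤ Γ (ξ (.ofAdd n))) = ↑(t ^ n) := by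
  rw [laurentHom, AlgHom.coe_toRingHom, MonoidAlgebra.lift_of, MonoidHom.comp_apply,
    splitLift_section, zpowersHom_apply, toAdd_ofAdd, Units.coeHom_apply]

theorem laurentHom_mapDomainRingHom (s : MonoidAlgebra ℤ ψ.ker) :
    laurentHom hξ hχ (MonoidAlgebra.mapDomainRingHom ℤ ψ.ker.subtype s) = ι (e s) := by
  have : (laurentHom hξ hχ).comp (MonoidAlgebra.mapDomainRingHom ℤ ψ.ker.subtype) =
      ι.comp e :=
    MonoidAlgebra.ringHom_ext' (RingHom.ext_int _ _) <| MonoidHom.ext fun k => by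
      simp [laurentHom, splitLift_coe]
  exact RingHom.congr_fun this s

theorem laurentHom_isUnit : ∀ s ∈ ((IsUnit.submonoid K).comap e).map
    (MonoidAlgebra.mapDomainRingHom ℤ ψ.ker.subtype), IsUnit (laurentHom hξ hχ s) := by
  rintro _ ⟨s, hs, rfl⟩
  rw [laurentHom_mapDomainRingHom]
  exact hs.map ι

theorem laurentHom_eq_sum (a : MonoidAlgebra ℤ Γ) :
    laurentHom hξ hχ a = (laurentCoeff hξ e a).sum fun n c => ↑(t ^ n) * ι c := by
  induction a using MonoidAlgebra.induction_linear with
  | zero => simp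
  | add a b ha hb => rw [map_add, map_add, ha, hb, Finsupp.sum_add_index'] <;> simp [mul_add]
  | single γ z =>
    rw [laurentHom_single]
    simp [laurentCoeff, splitEquiv]

theorem laurentHom_injective (he : Function.Injective e)
    (hrep : ∀ x : L', ∃! f : ℤ →₀ K, x = f.sum fun n a => ((t ^ n : L'ˣ) : L') * ι a) :
    Function.Injective (laurentHom hξ hχ) := fun a b hab =>
  laurentCoeff_injective hξ he <| (hrep _).unique (laurentHom_eq_sum hξ hχ a)
    (hab.trans (laurentHom_eq_sum hξ hχ b))

end SkewLaurent

theorem localization_iso_skewLaurent_general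
    (Γ : Type*) [Group Γ]
    (ψ : Γ →* Multiplicative ℤ)
    (ξ : Multiplicative ℤ →* Γ) (hξ : ∀ m, ψ (ξ m) = m)
    -- `K` is the right field of fractions of `ℤ Γ^ψ`
    (K : Type*) [DivisionRing K] (e : MonoidAlgebra ℤ ψ.ker →+* K)
    (he : Function.Injective e)
    (hefrac : ∀ x : K, ∃ a s : MonoidAlgebra ℤ ψ.ker, s ≠ 0 ∧ x = e a * (e s)⁻¹)
    -- `σK` is the automorphism of `K` induced by conjugation by `ξ(1)` on `Γ^ψ`
    (σK : K ≃+* K)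
    (hσK : ∀ h h' : ψ.ker, (h' : Γ) = (ξ (Multiplicative.ofAdd 1))⁻¹ * h * ξ (Multiplicative.ofAdd 1) →
      σK (e (MonoidAlgebra.of ℤ ψ.ker h)) = e (MonoidAlgebra.of ℤ ψ.ker h'))
    -- `L` is the Ore localization `ℤΓ (ℤΓ^ψ − {0})⁻¹`
    (L : Type*) [Ring L] (j : MonoidAlgebra ℤ Γ →+* L) (hj : Function.Injective j)
    (hjunit : ∀ s : MonoidAlgebra ℤ ψ.ker, s ≠ 0 →
      IsUnit (j (MonoidAlgebra.mapDomainRingHom ℤ ψ.ker.subtype s)))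
    (hjdenom : ∀ x : L, ∃ (a : MonoidAlgebra ℤ Γ) (s : MonoidAlgebra ℤ ψ.ker) (_ : s ≠ 0)
      (u : Lˣ), (u : L) = j (MonoidAlgebra.mapDomainRingHom ℤ ψ.ker.subtype s) ∧
      x = j a * (↑u⁻¹ : L))
    -- `L'` is the skew Laurent polynomial ring `K[t^{±1}]` twisted by `σK`
    (L' : Type*) [Ring L'] (ι : K →+* L') (t : L'ˣ)
    (hcomm : ∀ a : K, ι a * t = t * ι (σK a))
    (hrep : ∀ x : L', ∃! f : ℤ →₀ K, x = f.sum fun n a => ((t ^ n : L'ˣ) : L') * ι a) :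
    ∃ φ : L ≃+* L',
      (∀ s : MonoidAlgebra ℤ ψ.ker,
        φ (j (MonoidAlgebra.mapDomainRingHom ℤ ψ.ker.subtype s)) = ι (e s)) ∧
      φ (j (MonoidAlgebra.of ℤ Γ (ξ (Multiplicative.ofAdd 1)))) = t := by
  have hχ := kerUnits_conjNormal_inv hσK hcomm
  have hfrac := isRightRingOfFractions_of_eq_mul_inv he hj hjunit hjdenom
  have hFS := laurentHom_isUnit hξ hχ
  set φ := hfrac.lift _ hFS
  have hφt (n : ℤ) : φ (j (MonoidAlgebra.of ℤ Γ (ξ (.ofAdd n)))) = ↑(t ^ n) := by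
    rw [hfrac.lift_apply_map, laurentHom_of_section]
  have hφK (c : K) : ι c ∈ φ.range := by
    obtain ⟨a, s, hs, rfl⟩ := hefrac c
    have hes : IsUnit (e s) := isUnit_iff_ne_zero.mpr ((map_ne_zero_iff e he).mpr hs)
    obtain ⟨x, hx⟩ := hfrac.exists_lift_mul_eq _ hFS
      (MonoidAlgebra.mapDomainRingHom ℤ ψ.ker.subtype a) ⟨s, hes, rfl⟩
    rw [laurentHom_mapDomainRingHom, laurentHom_mapDomainRingHom] at hx
    refine ⟨x, (hes.map ι).mul_left_inj.mp ?_⟩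
    rw [hx, ← map_mul, inv_mul_cancel_right₀ hes.ne_zero]
  have hsurj : Function.Surjective φ := by
    intro x
    obtain ⟨f, rfl, -⟩ := hrep x
    exact Subring.sum_mem _ fun n _ =>
      mul_mem (RingHom.mem_range.mpr ⟨_, hφt n⟩) (hφK (f n))
  have hinj := hfrac.lift_injective _ hFS (laurentHom_injective hξ hχ he hrep)
  refine ⟨.ofBijective φ ⟨hinj, hsurj⟩,
    fun s => (hfrac.lift_apply_map _ hFS _).trans (laurentHom_mapDomainRingHom hξ hχ s), ?_⟩
  exact (hφt 1).trans (congrArg Units.val (zpow_one t))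

/-- Let `Γ` be PTFA and `ψ : Γ ↠ ℤ` an epimorphism with kernel `Γ^ψ` and splitting `ξ`.
Then the localization `ℤΓ (ℤΓ^ψ − {0})⁻¹` is isomorphic, as a ring, to the skew Laurent
polynomial ring `K_{Γ^ψ}[t^{±1}]` over the right field of fractions `K_{Γ^ψ}` of `ℤΓ^ψ`,
where `a t = t (ξ(1)⁻¹ a ξ(1))`; the isomorphism is induced by `ξ`, sending `ℤΓ^ψ` to
`K_{Γ^ψ}` and `ξ(1)` to `t`.

Here the localization is axiomatized as any ring `L` with an injective map `j` from `ℤΓ`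
inverting the nonzero elements of `ℤΓ^ψ` and with the right-fraction property, and the
skew Laurent polynomial ring as any ring `L'` containing `K_{Γ^ψ}` (via `ι`) and a unit
`t` with the twisted commutation rule and unique Laurent representations. -/
theorem localization_iso_skewLaurent
    (Γ : Type*) [Group Γ] (hΓ : IsPTFA Γ)
    (ψ : Γ →* Multiplicative ℤ) (hψ : Function.Surjective ψ)
    (ξ : Multiplicative ℤ →* Γ) (hξ : ∀ m, ψ (ξ m) = m)
    -- `K` is the right field of fractions of `ℤ Γ^ψ`
    (K : Type*) [DivisionRing K] (e : MonoidAlgebra ℤ ψ.ker →+* K)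
    (he : Function.Injective e)
    (hefrac : ∀ x : K, ∃ a s : MonoidAlgebra ℤ ψ.ker, s ≠ 0 ∧ x = e a * (e s)⁻¹)
    -- `σK` is the automorphism of `K` induced by conjugation by `ξ(1)` on `Γ^ψ`
    (σK : K ≃+* K)
    (hσK : ∀ h h' : ψ.ker, (h' : Γ) = (ξ (Multiplicative.ofAdd 1))⁻¹ * h * ξ (Multiplicative.ofAdd 1) →
      σK (e (MonoidAlgebra.of ℤ ψ.ker h)) = e (MonoidAlgebra.of ℤ ψ.ker h'))
    -- `L` is the Ore localization `ℤΓ (ℤΓ^ψ − {0})⁻¹`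
    (L : Type*) [Ring L] (j : MonoidAlgebra ℤ Γ →+* L) (hj : Function.Injective j)
    (hjunit : ∀ s : MonoidAlgebra ℤ ψ.ker, s ≠ 0 →
      IsUnit (j (MonoidAlgebra.mapDomainRingHom ℤ ψ.ker.subtype s)))
    (hjdenom : ∀ x : L, ∃ (a : MonoidAlgebra ℤ Γ) (s : MonoidAlgebra ℤ ψ.ker) (_ : s ≠ 0)
      (u : Lˣ), (u : L) = j (MonoidAlgebra.mapDomainRingHom ℤ ψ.ker.subtype s) ∧
      x = j a * (↑u⁻¹ : L))
    -- `L'` is the skew Laurent polynomial ring `K[t^{±1}]` twisted by `σK`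
    (L' : Type*) [Ring L'] (ι : K →+* L') (hι : Function.Injective ι) (t : L'ˣ)
    (hcomm : ∀ a : K, ι a * t = t * ι (σK a))
    (hrep : ∀ x : L', ∃! f : ℤ →₀ K, x = f.sum fun n a => ((t ^ n : L'ˣ) : L') * ι a) :
    ∃ φ : L ≃+* L',
      (∀ s : MonoidAlgebra ℤ ψ.ker,
        φ (j (MonoidAlgebra.mapDomainRingHom ℤ ψ.ker.subtype s)) = ι (e s)) ∧
      φ (j (MonoidAlgebra.of ℤ Γ (ξ (Multiplicative.ofAdd 1)))) = t :=
  localization_iso_skewLaurent_general Γ ψ ξ hξ K e he hefrac σK hσK L j hj hjunit hjdenom L' ι t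
    hcomm hrep
end

section
/- Every invertible matrix P over a skew Laurent polynomial ring K[t^{±1}] over a skew field (a Euclidean domain) is a product of elementary matrices and invertible diagonal matrices over K[t^{±1}], and consequently the degree of its Dieudonné determinant (computed in the skew field of fractions) is zero. -/
set_option maxHeartbeats 1000000

/-- Degree on a skew Laurent polynomial ring from the representation function. -/
def lauDeg {L K : Type*} [Zero K] (rep : L → (ℤ →₀ K)) (x : L) : ℤ :=
  (WithBot.unbotD 0 (rep x).support.max) - (WithTop.untopD 0 (rep x).support.min)

/-!
The skew Laurent ring `L = K[t, t⁻¹; σ]` is a domain whose degree `deg x = top x - bot x` (spread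
of exponents) is additive, so units have degree `0`; cancelling the top coefficient of `a` by a
monomial multiple of `b` shows that `L` is Euclidean in Cohn's sense, with quotients on the left.

Over such a domain every invertible matrix lies in `GE_n`: row operations run the Euclidean
algorithm down a column until a single nonzero entry is left, which is a unit because the matrix
is invertible and a domain is Dedekind-finite; moved to the diagonal, it clears its row by column
operations, and repeating this for every index leaves an invertible diagonal matrix.
The Dieudonné determinant kills transvections and sends a diagonal unit matrix over `L` to a
product of classes of units of `L`, all of degree `0`.
-/

/-- Cohn's Euclidean condition, with quotients on the left. -/
def IsLeftEuclidean {L : Type*} [Ring L] (w : L → ℕ) : Prop :=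
  ∀ a b : L, b ≠ 0 → w b ≤ w a → ∃ q, w (a - q * b) < w a

namespace Matrix

section IsDiagonalOn

variable {n α : Type*} [Zero α]

def IsDiagonalOn (s : Finset n) (C : Matrix n n α) : Prop :=
  ∀ i j, i ≠ j → i ∈ s ∨ j ∈ s → C i j = 0

lemma IsDiagonalOn.apply_eq_zero_of_mem_of_notMem {s : Finset n} {C : Matrix n n α}
    (hC : IsDiagonalOn s C) {i p : n} (hi : i ∈ s) (hp : p ∉ s) : C i p = 0 :=
  hC i p (fun h => hp (h ▸ hi)) (Or.inl hi)

end IsDiagonalOn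

section GE

variable (n L : Type*) [Fintype n] [DecidableEq n] [Ring L]

def elementaryOrDiagonal : Set (Matrix n n L)ˣ :=
  {Q | (∃ (i j : n) (c : L), i ≠ j ∧ Q.val = 1 + single i j c) ∨
    ∃ d : n → Lˣ, Q.val = diagonal fun i => (d i : L)}

/-- Cohn's `GE_n(L)`. -/
def GE : Subgroup (Matrix n n L)ˣ := Subgroup.closure (elementaryOrDiagonal n L)

variable {n L}

lemma one_add_single_mul_one_add_single {i j : n} (hij : i ≠ j) (c d : L) :
    (1 + single i j c) * (1 + single i j d) = (1 + single i j (c + d) : Matrix n n L) := by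
  rw [mul_add, add_mul, add_mul, single_mul_single_of_ne _ _ _ _ hij.symm, single_add]
  simp only [one_mul, mul_one, add_zero]
  abel

def transvectionUnit {i j : n} (hij : i ≠ j) (c : L) : (Matrix n n L)ˣ where
  val := 1 + single i j c
  inv := 1 + single i j (-c)
  val_inv := by rw [one_add_single_mul_one_add_single hij, add_neg_cancel, single_zero, add_zero]
  inv_val := by rw [one_add_single_mul_one_add_single hij, neg_add_cancel, single_zero, add_zero]

@[simp] lemma coe_transvectionUnit {i j : n} (hij : i ≠ j) (c : L) :
    (transvectionUnit hij c : Matrix n n L) = 1 + single i j c := rfl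

lemma transvectionUnit_mem_GE {i j : n} (hij : i ≠ j) (c : L) : transvectionUnit hij c ∈ GE n L :=
  Subgroup.subset_closure (Or.inl ⟨i, j, c, hij, rfl⟩)

lemma inv_mem_elementaryOrDiagonal {Q : (Matrix n n L)ˣ} (hQ : Q ∈ elementaryOrDiagonal n L) :
    Q⁻¹ ∈ elementaryOrDiagonal n L := by
  rcases hQ with ⟨i, j, c, hij, hQ⟩ | ⟨d, hQ⟩
  · refine Or.inl ⟨i, j, -c, hij, Units.inv_eq_of_mul_eq_one_right ?_⟩
    rw [hQ, one_add_single_mul_one_add_single hij, add_neg_cancel, single_zero, add_zero]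
  · refine Or.inr ⟨fun i => (d i)⁻¹, Units.inv_eq_of_mul_eq_one_right ?_⟩
    simp [hQ, diagonal_mul_diagonal]

lemma exists_list_of_mem_GE {P : (Matrix n n L)ˣ} (hP : P ∈ GE n L) :
    ∃ l : List (Matrix n n L)ˣ, (∀ Q ∈ l, Q ∈ elementaryOrDiagonal n L) ∧ l.prod = P := by
  have hinv : (elementaryOrDiagonal n L)⁻¹ ⊆ elementaryOrDiagonal n L := fun Q hQ => by
    simpa using inv_mem_elementaryOrDiagonal hQ
  rw [GE, ← Subgroup.mem_toSubmonoid, Subgroup.closure_toSubmonoid,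
    Set.union_eq_left.mpr hinv] at hP
  exact Submonoid.exists_list_of_mem_closure hP

lemma one_add_single_mul_apply (i j : n) (c : L) (M : Matrix n n L) (k l : n) :
    ((1 + single i j c) * M) k l = M k l + if k = i then c * M j l else 0 := by
  rw [add_mul, one_mul, add_apply]
  split_ifs with h
  · rw [h, single_mul_apply_same]
  · rw [single_mul_apply_of_ne _ _ _ _ _ h]

lemma mul_one_add_sum_single_apply (p : n) (t : Finset n) (c : n → L) (M : Matrix n n L)
    (k l : n) :
    (M * (1 + ∑ j ∈ t, single p j (c j))) k l = M k l + if l ∈ t then M k p * c l else 0 := by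
  have hsingle : ∀ j, (M * single p j (c j)) k l = if l = j then M k p * c j else 0 := by
    intro j
    split_ifs with h
    · rw [h, mul_single_apply_same]
    · exact mul_single_apply_of_ne _ _ _ _ _ h _
  rw [mul_add, mul_one, Matrix.mul_sum, add_apply, sum_apply,
    Finset.sum_congr rfl fun j _ => hsingle j, Finset.sum_ite_eq]

lemma exists_val_eq_one_add_sum_single {p : n} (c : n → L) {t : Finset n} (hp : p ∉ t) :
    ∃ F ∈ GE n L, (F : Matrix n n L) = 1 + ∑ j ∈ t, single p j (c j) := by
  induction t using Finset.induction_on with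
  | empty => exact ⟨1, one_mem _, by simp⟩
  | insert a t ha ih =>
    obtain ⟨F, hF, hFval⟩ := ih fun h => hp (Finset.mem_insert_of_mem h)
    have hpa : p ≠ a := fun h => hp (h ▸ Finset.mem_insert_self p t)
    refine ⟨transvectionUnit hpa (c a) * F, mul_mem (transvectionUnit_mem_GE hpa _) hF, ?_⟩
    have hvanish : single p a (c a) * ∑ j ∈ t, single p j (c j) = 0 := by
      rw [Matrix.mul_sum]
      exact Finset.sum_eq_zero fun j _ => single_mul_single_of_ne _ _ _ _ hpa.symm _
    rw [Units.val_mul, hFval, Finset.sum_insert ha]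
    change (1 + single p a (c a)) * _ = _
    rw [mul_add, add_mul, add_mul, hvanish]
    simp only [one_mul, mul_one, add_zero]
    abel

lemma IsDiagonalOn.one_add_single_mul {s : Finset n} {C : Matrix n n L} (hC : IsDiagonalOn s C)
    {i j : n} (hi : i ∉ s) (hj : j ∉ s) (c : L) : IsDiagonalOn s ((1 + single i j c) * C) := by
  intro k l hkl hmem
  rw [one_add_single_mul_apply, hC k l hkl hmem]
  split_ifs with hk
  · subst hk
    have hl : l ∈ s := hmem.resolve_left hi
    rw [hC j l (fun h => hj (h ▸ hl)) (Or.inr hl), mul_zero, add_zero]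
  · rw [add_zero]

section Reduction

variable {w : L → ℕ} (hw : IsLeftEuclidean w)
include hw

theorem exists_GE_mul_apply_eq_zero_of_ne {s : Finset n} {p : n} (hp : p ∉ s) (C : Matrix n n L)
    (hC : IsDiagonalOn s C) :
    ∃ E ∈ GE n L, IsDiagonalOn s ((E : Matrix n n L) * C) ∧
      ∃ i₀ ∉ s, ∀ i ≠ i₀, ((E : Matrix n n L) * C) i p = 0 := by
  induction hN : ∑ i, w (C i p) using Nat.strong_induction_on generalizing C with
  | _ N ih =>
  by_cases hpair : ∃ i j, i ∉ s ∧ j ∉ s ∧ i ≠ j ∧ C j p ≠ 0 ∧ w (C j p) ≤ w (C i p)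
  · obtain ⟨i, j, hi, hj, hij, hjp, hle⟩ := hpair
    obtain ⟨q, hq⟩ := hw _ _ hjp hle
    set T := transvectionUnit hij (-q)
    have hcol k : ((T : Matrix n n L) * C) k p = if k = i then C i p - q * C j p else C k p := by
      change ((1 + single i j (-q)) * C) k p = _
      rw [one_add_single_mul_apply]
      split_ifs with hk
      · rw [hk, neg_mul, sub_eq_add_neg]
      · rw [add_zero]
    have hlt : ∑ k, w (((T : Matrix n n L) * C) k p) < N := hN ▸ Finset.sum_lt_sum
      (fun k _ => by rw [hcol]; split_ifs with hk <;> [exact hk ▸ hq.le; exact le_rfl])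
      ⟨i, Finset.mem_univ i, by rw [hcol, if_pos rfl]; exact hq⟩
    obtain ⟨E, hE, hEC, i₀, hi₀, hcol₀⟩ := ih _ hlt (T * C) (hC.one_add_single_mul hi hj _) rfl
    refine ⟨E * T, mul_mem hE (transvectionUnit_mem_GE hij _), ?_, i₀, hi₀, ?_⟩
    · rwa [Units.val_mul, Matrix.mul_assoc]
    · rwa [Units.val_mul, Matrix.mul_assoc]
  · push Not at hpair
    refine ⟨1, one_mem _, by simpa using hC, ?_⟩
    simp only [Units.val_one, Matrix.one_mul]
    by_cases hne : ∃ i₀ ∉ s, C i₀ p ≠ 0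
    · obtain ⟨i₀, hi₀, hi₀p⟩ := hne
      refine ⟨i₀, hi₀, fun i hi => ?_⟩
      by_cases his : i ∈ s
      · exact hC.apply_eq_zero_of_mem_of_notMem his hp
      by_contra hip
      rcases le_total (w (C i p)) (w (C i₀ p)) with hle | hle
      · exact (hpair i₀ i hi₀ his (Ne.symm hi) hip).not_ge hle
      · exact (hpair i i₀ his hi₀ hi hi₀p).not_ge hle
    · push Not at hne
      exact ⟨p, hp, fun i _ =>
        if his : i ∈ s then hC.apply_eq_zero_of_mem_of_notMem his hp else hne i his⟩

theorem exists_GE_mul_apply_eq_zero_of_ne_self {s : Finset n} {p : n} (hp : p ∉ s)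
    (C : Matrix n n L) (hC : IsDiagonalOn s C) :
    ∃ E ∈ GE n L, IsDiagonalOn s ((E : Matrix n n L) * C) ∧
      ∀ i ≠ p, ((E : Matrix n n L) * C) i p = 0 := by
  obtain ⟨E, hE, hEC, i₀, hi₀, hcol⟩ := exists_GE_mul_apply_eq_zero_of_ne hw hp C hC
  by_cases h : i₀ = p
  · exact ⟨E, hE, hEC, h ▸ hcol⟩
  -- add row `i₀` to row `p`, then subtract row `p` from row `i₀`
  have hpi₀ : p ≠ i₀ := Ne.symm h
  refine ⟨transvectionUnit h (-1) * transvectionUnit hpi₀ 1 * E,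
    mul_mem (mul_mem (transvectionUnit_mem_GE _ _) (transvectionUnit_mem_GE _ _)) hE, ?_, ?_⟩
  all_goals rw [Units.val_mul, Units.val_mul, Matrix.mul_assoc, Matrix.mul_assoc,
    coe_transvectionUnit, coe_transvectionUnit]
  · exact (hEC.one_add_single_mul hp hi₀ 1).one_add_single_mul hi₀ hp (-1)
  · intro i hi
    by_cases hii₀ : i = i₀
    · simp [one_add_single_mul_apply, hii₀, h, hcol p hpi₀]
    · simp [one_add_single_mul_apply, hii₀, hi, hcol i hii₀]

end Reduction

variable [IsDedekindFiniteMonoid L]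

lemma isUnit_apply_of_forall_ne_eq_zero (A : (Matrix n n L)ˣ) {i₀ j : n}
    (h : ∀ i ≠ i₀, (A : Matrix n n L) i j = 0) : IsUnit ((A : Matrix n n L) i₀ j) := by
  have hinv := congrFun (congrFun A.inv_mul j) j
  rw [mul_apply, one_apply_eq,
    Finset.sum_eq_single i₀ (fun i _ hi => by rw [h i hi, mul_zero]) (by simp)] at hinv
  exact IsUnit.of_mul_eq_one_right _ hinv

lemma mem_GE_of_forall_ne_eq_zero (D : (Matrix n n L)ˣ)
    (hD : ∀ i j, i ≠ j → (D : Matrix n n L) i j = 0) : D ∈ GE n L := by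
  have hunit i : IsUnit ((D : Matrix n n L) i i) :=
    isUnit_apply_of_forall_ne_eq_zero D fun k hk => hD k i hk
  refine Subgroup.subset_closure (Or.inr ⟨fun i => (hunit i).unit, ?_⟩)
  ext i j
  by_cases h : i = j
  · simp [h]
  · simp [h, hD i j h]

theorem exists_GE_isDiagonalOn_insert {w : L → ℕ} (hw : IsLeftEuclidean w) {s : Finset n} {p : n}
    (hp : p ∉ s) (P : (Matrix n n L)ˣ) (hP : IsDiagonalOn s (P : Matrix n n L)) :
    ∃ E ∈ GE n L, ∃ F ∈ GE n L,
      IsDiagonalOn (insert p s) ((E * P * F : (Matrix n n L)ˣ) : Matrix n n L) := by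
  obtain ⟨E, hE, hEP, hcol⟩ := exists_GE_mul_apply_eq_zero_of_ne_self hw hp (P : Matrix n n L) hP
  rw [← Units.val_mul] at hEP hcol
  set A : (Matrix n n L)ˣ := E * P
  have hpivot : IsUnit ((A : Matrix n n L) p p) := isUnit_apply_of_forall_ne_eq_zero A hcol
  -- clear row `p` by column operations using the unit pivot
  set c : n → L := fun j => -(↑hpivot.unit⁻¹ * (A : Matrix n n L) p j)
  obtain ⟨F, hF, hFval⟩ := exists_val_eq_one_add_sum_single c (Finset.notMem_erase p Finset.univ)
  refine ⟨E, hE, F, hF, fun i j hij hmem => ?_⟩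
  rw [Units.val_mul, hFval, mul_one_add_sum_single_apply]
  by_cases hip : i = p
  · subst hip
    rw [if_pos (Finset.mem_erase.mpr ⟨Ne.symm hij, Finset.mem_univ j⟩), mul_neg, ← mul_assoc,
      hpivot.mul_val_inv, one_mul, add_neg_cancel]
  · rw [hcol i hip, zero_mul, ite_self, add_zero]
    by_cases hjp : j = p
    · exact hjp ▸ hcol i hip
    · exact hEP i j hij (by simpa [hip, hjp] using hmem)

theorem mem_GE_of_isLeftEuclidean {w : L → ℕ} (hw : IsLeftEuclidean w) (P : (Matrix n n L)ˣ) :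
    P ∈ GE n L := by
  have key (s : Finset n) :
      ∃ E ∈ GE n L, ∃ F ∈ GE n L,
        IsDiagonalOn s ((E * P * F : (Matrix n n L)ˣ) : Matrix n n L) := by
    induction s using Finset.induction_on with
    | empty => exact ⟨1, one_mem _, 1, one_mem _, fun i j _ h => by simp at h⟩
    | insert p s hp ih =>
      obtain ⟨E, hE, F, hF, hs⟩ := ih
      obtain ⟨E', hE', F', hF', hps⟩ := exists_GE_isDiagonalOn_insert hw hp _ hs
      exact ⟨E' * E, mul_mem hE' hE, F * F', mul_mem hF hF', by simpa only [mul_assoc] using hps⟩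
  obtain ⟨E, hE, F, hF, hD⟩ := key Finset.univ
  have hdiag : E * P * F ∈ GE n L :=
    mem_GE_of_forall_ne_eq_zero _ fun i j hij => hD i j hij (Or.inl (Finset.mem_univ i))
  have hP : P = E⁻¹ * (E * P * F) * F⁻¹ := by group
  rw [hP]
  exact mul_mem (mul_mem (inv_mem hE) hdiag) (inv_mem hF)

end GE

end Matrix

/-- `K[t, t⁻¹; σ]`, presented as in the theorem below. -/
structure SkewLaurentData (K L : Type*) [DivisionRing K] [Ring L] where
  σ : K ≃+* K
  ι₀ : K →+* L
  t : Lˣ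
  hcomm : ∀ a : K, ι₀ a * t = t * ι₀ (σ a)
  rep : L → (ℤ →₀ K)
  hrep : ∀ x : L, x = (rep x).sum fun n a => ((t ^ n : Lˣ) : L) * ι₀ a
  hrep_unique : ∀ (x : L) (f : ℤ →₀ K),
    x = (f.sum fun n a => ((t ^ n : Lˣ) : L) * ι₀ a) → f = rep x

namespace SkewLaurentData

variable {K L : Type*} [DivisionRing K] [Ring L] (S : SkewLaurentData K L)

def mon (n : ℤ) (a : K) : L := ((S.t ^ n : Lˣ) : L) * S.ι₀ a

lemma ι₀_mul_zpow (n : ℤ) (a : K) :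
    S.ι₀ a * ((S.t ^ n : Lˣ) : L) = ((S.t ^ n : Lˣ) : L) * S.ι₀ ((S.σ ^ n) a) := by
  induction n using Int.induction_on generalizing a with
  | zero => simp
  | succ n ih =>
    have ht : ((S.t ^ ((n : ℤ) + 1) : Lˣ) : L) = S.t * ((S.t ^ (n : ℤ) : Lˣ) : L) := by
      rw [add_comm, zpow_add, zpow_one, Units.val_mul]
    rw [ht, ← mul_assoc, S.hcomm, mul_assoc, ih, ← mul_assoc, zpow_add_one]
    rfl
  | pred n ih =>
    have hσ : S.σ ((S.σ ^ (-(n : ℤ) - 1)) a) = (S.σ ^ (-(n : ℤ))) a := by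
      rw [← RingAut.mul_apply, ← zpow_one_add, add_sub_cancel]
    have ht : ((S.t ^ (-(n : ℤ)) : Lˣ) : L) = ((S.t ^ (-(n : ℤ) - 1) : Lˣ) : L) * S.t := by
      rw [← Units.val_mul, ← zpow_add_one, sub_add_cancel]
    apply (Units.mul_left_inj S.t).mp
    rw [mul_assoc, ← ht, ih, ht, mul_assoc, mul_assoc, S.hcomm, hσ]

lemma mon_mul_mon (n m : ℤ) (a c : K) :
    S.mon n a * S.mon m c = S.mon (n + m) ((S.σ ^ m) a * c) := by
  simp only [mon, zpow_add, Units.val_mul, map_mul, mul_assoc, ← mul_assoc (S.ι₀ a), S.ι₀_mul_zpow]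

noncomputable def repEquiv : L ≃+ (ℤ →₀ K) := AddEquiv.symm
  { toFun := fun f => f.sum S.mon
    invFun := S.rep
    left_inv := fun f => (S.hrep_unique _ f rfl).symm
    right_inv := fun x => (S.hrep x).symm
    map_add' := fun _ _ => Finsupp.sum_add_index' (by simp [mon]) (by simp [mon, mul_add]) }

@[simp] lemma repEquiv_apply (x : L) : S.repEquiv x = S.rep x := rfl

@[simp] lemma rep_zero : S.rep 0 = 0 := map_zero S.repEquiv

lemma rep_sub (x y : L) : S.rep (x - y) = S.rep x - S.rep y := map_sub S.repEquiv x y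

lemma rep_eq_zero_iff {x : L} : S.rep x = 0 ↔ x = 0 := S.repEquiv.map_eq_zero_iff

lemma rep_mon (n : ℤ) (a : K) : S.rep (S.mon n a) = Finsupp.single n a :=
  (S.hrep_unique _ _ (by rw [Finsupp.sum_single_index (by simp)]; rfl)).symm

lemma eq_sum_mon (x : L) : x = ∑ n ∈ (S.rep x).support, S.mon n (S.rep x n) := S.hrep x

lemma rep_mul_apply (x y : L) (k : ℤ) :
    S.rep (x * y) k = (S.rep x).sum fun n a => (S.σ ^ (k - n)) a * S.rep y (k - n) := by
  have hxy : x * y = ∑ n ∈ (S.rep x).support, ∑ m ∈ (S.rep y).support,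
      S.mon (n + m) ((S.σ ^ m) (S.rep x n) * S.rep y m) := by
    conv_lhs => rw [S.eq_sum_mon x, S.eq_sum_mon y, Finset.sum_mul_sum]
    simp only [mon_mul_mon]
  rw [hxy, ← repEquiv_apply]
  simp only [map_sum, repEquiv_apply, rep_mon, Finsupp.finsetSum_apply, Finsupp.single_apply]
  refine Finset.sum_congr rfl fun n _ => ?_
  simp only [← eq_sub_iff_add_eq', Finset.sum_ite_eq']
  split_ifs with h
  · rfl
  · rw [Finsupp.notMem_support_iff.mp h, mul_zero]

lemma rep_mon_mul_apply (n : ℤ) (a : K) (y : L) (k : ℤ) :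
    S.rep (S.mon n a * y) k = (S.σ ^ (k - n)) a * S.rep y (k - n) := by
  rw [rep_mul_apply, rep_mon, Finsupp.sum_single_index (by simp)]

lemma rep_mul_apply_add {x y : L} {n₀ m₀ : ℤ}
    (h : ∀ n ∈ (S.rep x).support, n ≠ n₀ → S.rep y (n₀ + m₀ - n) = 0) :
    S.rep (x * y) (n₀ + m₀) = (S.σ ^ m₀) (S.rep x n₀) * S.rep y m₀ := by
  rw [rep_mul_apply, Finsupp.sum,
    Finset.sum_eq_single n₀ (fun n hn hne => by rw [h n hn hne, mul_zero])
      (fun hn => by rw [Finsupp.notMem_support_iff.mp hn, map_zero, zero_mul]),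
    add_sub_cancel_left]

lemma exists_mem_support_of_mem_support_mul {x y : L} {k : ℤ}
    (hk : k ∈ (S.rep (x * y)).support) : ∃ n ∈ (S.rep x).support, k - n ∈ (S.rep y).support := by
  rw [Finsupp.mem_support_iff, rep_mul_apply] at hk
  obtain ⟨n, hn, hne⟩ := Finset.exists_ne_zero_of_sum_ne_zero hk
  exact ⟨n, hn, Finsupp.mem_support_iff.mpr (right_ne_zero_of_mul hne)⟩

def top (x : L) : ℤ := WithBot.unbotD 0 (S.rep x).support.max

def bot (x : L) : ℤ := WithTop.untopD 0 (S.rep x).support.min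

lemma lauDeg_eq_top_sub_bot (x : L) : lauDeg S.rep x = S.top x - S.bot x := rfl

lemma support_nonempty {x : L} (hx : x ≠ 0) : (S.rep x).support.Nonempty :=
  Finsupp.support_nonempty_iff.mpr (S.rep_eq_zero_iff.not.mpr hx)

lemma ne_zero_of_mem_support {x : L} {k : ℤ} (hk : k ∈ (S.rep x).support) : x ≠ 0 := by
  rintro rfl
  simp at hk

lemma isGreatest_top {x : L} (hx : x ≠ 0) : IsGreatest ↑(S.rep x).support (S.top x) := by
  rw [top, ← Finset.coe_max' (S.support_nonempty hx), WithBot.unbotD_coe]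
  exact Finset.isGreatest_max' _ _

lemma isLeast_bot {x : L} (hx : x ≠ 0) : IsLeast ↑(S.rep x).support (S.bot x) := by
  rw [bot, ← Finset.coe_min' (S.support_nonempty hx), WithTop.untopD_coe]
  exact Finset.isLeast_min' _ _

lemma top_eq_of_isGreatest {x : L} {k : ℤ} (h : IsGreatest ↑(S.rep x).support k) : S.top x = k :=
  (S.isGreatest_top (S.ne_zero_of_mem_support h.1)).unique h

lemma bot_eq_of_isLeast {x : L} {k : ℤ} (h : IsLeast ↑(S.rep x).support k) : S.bot x = k :=
  (S.isLeast_bot (S.ne_zero_of_mem_support h.1)).unique h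

lemma lauDeg_nonneg {x : L} (hx : x ≠ 0) : 0 ≤ lauDeg S.rep x :=
  sub_nonneg.mpr ((S.isLeast_bot hx).2 (S.isGreatest_top hx).1)

lemma isGreatest_top_mul {x y : L} (hx : x ≠ 0) (hy : y ≠ 0) :
    IsGreatest ↑(S.rep (x * y)).support (S.top x + S.top y) := by
  have hxt := S.isGreatest_top hx
  have hyt := S.isGreatest_top hy
  refine ⟨?_, fun k hk => ?_⟩
  · rw [Finset.mem_coe, Finsupp.mem_support_iff, S.rep_mul_apply_add fun n hn hne =>
      Finsupp.notMem_support_iff.mp fun h => by have := hxt.2 hn; have := hyt.2 h; omega]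
    exact mul_ne_zero ((S.σ ^ _).map_ne_zero_iff.mpr (Finsupp.mem_support_iff.mp hxt.1))
      (Finsupp.mem_support_iff.mp hyt.1)
  · obtain ⟨n, hn, hkn⟩ := S.exists_mem_support_of_mem_support_mul hk
    have := hxt.2 hn
    have := hyt.2 hkn
    omega

lemma isLeast_bot_mul {x y : L} (hx : x ≠ 0) (hy : y ≠ 0) :
    IsLeast ↑(S.rep (x * y)).support (S.bot x + S.bot y) := by
  have hxb := S.isLeast_bot hx
  have hyb := S.isLeast_bot hy
  refine ⟨?_, fun k hk => ?_⟩
  · rw [Finset.mem_coe, Finsupp.mem_support_iff, S.rep_mul_apply_add fun n hn hne =>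
      Finsupp.notMem_support_iff.mp fun h => by have := hxb.2 hn; have := hyb.2 h; omega]
    exact mul_ne_zero ((S.σ ^ _).map_ne_zero_iff.mpr (Finsupp.mem_support_iff.mp hxb.1))
      (Finsupp.mem_support_iff.mp hyb.1)
  · obtain ⟨n, hn, hkn⟩ := S.exists_mem_support_of_mem_support_mul hk
    have := hxb.2 hn
    have := hyb.2 hkn
    omega

include S in
lemma mul_ne_zero {x y : L} (hx : x ≠ 0) (hy : y ≠ 0) : x * y ≠ 0 :=
  S.ne_zero_of_mem_support (S.isGreatest_top_mul hx hy).1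

lemma lauDeg_mul {x y : L} (hx : x ≠ 0) (hy : y ≠ 0) :
    lauDeg S.rep (x * y) = lauDeg S.rep x + lauDeg S.rep y := by
  simp only [lauDeg_eq_top_sub_bot, S.top_eq_of_isGreatest (S.isGreatest_top_mul hx hy),
    S.bot_eq_of_isLeast (S.isLeast_bot_mul hx hy)]
  ring

include S in
lemma noZeroDivisors : NoZeroDivisors L where
  eq_zero_or_eq_zero_of_mul_eq_zero {x y} h := by
    by_contra! hxy
    exact S.mul_ne_zero hxy.1 hxy.2 h

lemma rep_one : S.rep 1 = Finsupp.single 0 1 := by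
  rw [← S.rep_mon]
  simp [mon]

include S in
lemma nontrivial : Nontrivial L :=
  ⟨⟨1, 0, fun h => by simpa [S.rep_one] using congrArg S.rep h⟩⟩

lemma lauDeg_one : lauDeg S.rep (1 : L) = 0 := by
  have h : IsGreatest ↑(S.rep 1).support (0 : ℤ) ∧ IsLeast ↑(S.rep 1).support (0 : ℤ) := by
    simp [S.rep_one, isGreatest_singleton, isLeast_singleton]
  rw [lauDeg_eq_top_sub_bot, S.top_eq_of_isGreatest h.1, S.bot_eq_of_isLeast h.2, sub_self]

lemma lauDeg_unit (u : Lˣ) : lauDeg S.rep (u : L) = 0 := by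
  have := S.nontrivial
  have h := S.lauDeg_mul u.ne_zero u⁻¹.ne_zero
  rw [u.mul_inv, S.lauDeg_one] at h
  have := S.lauDeg_nonneg u.ne_zero
  have := S.lauDeg_nonneg u⁻¹.ne_zero
  omega

open Classical in
/-- The degree shifted by one, with `weight 0 = 0` below every nonzero element. -/
noncomputable def weight (x : L) : ℕ := if x = 0 then 0 else (lauDeg S.rep x).toNat + 1

lemma weight_lt_of_lauDeg_lt {x y : L} (hy : y ≠ 0) (h : x ≠ 0 → lauDeg S.rep x < lauDeg S.rep y) :
    S.weight x < S.weight y := by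
  by_cases hx : x = 0
  · simp [weight, hx, hy]
  · have := h hx
    have := S.lauDeg_nonneg hx
    simp only [weight, hx, hy, if_false]
    omega

/-- The monomial cancelling the top coefficient of `a` against that of `b`. -/
noncomputable def leadQuot (a b : L) : L :=
  S.mon (S.top a - S.top b) ((S.σ ^ (-S.top b)) (S.rep a (S.top a) * (S.rep b (S.top b))⁻¹))

lemma rep_leadQuot_mul_top {a b : L} (hb : b ≠ 0) :
    S.rep (S.leadQuot a b * b) (S.top a) = S.rep a (S.top a) := by
  rw [leadQuot, rep_mon_mul_apply, sub_sub_cancel, ← RingAut.mul_apply, ← zpow_add,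
    add_neg_cancel, zpow_zero, RingAut.one_apply, mul_assoc,
    inv_mul_cancel₀ (Finsupp.mem_support_iff.mp (S.isGreatest_top hb).1), mul_one]

lemma lauDeg_sub_leadQuot_mul_lt {a b : L} (ha : a ≠ 0) (hb : b ≠ 0)
    (hdeg : lauDeg S.rep b ≤ lauDeg S.rep a) (hr : a - S.leadQuot a b * b ≠ 0) :
    lauDeg S.rep (a - S.leadQuot a b * b) < lauDeg S.rep a := by
  obtain ⟨-, hTa⟩ := S.isGreatest_top ha
  obtain ⟨-, hBa⟩ := S.isLeast_bot ha
  obtain ⟨-, hTb⟩ := S.isGreatest_top hb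
  obtain ⟨-, hBb⟩ := S.isLeast_bot hb
  rw [lauDeg_eq_top_sub_bot, lauDeg_eq_top_sub_bot] at hdeg ⊢
  have hsupp : ∀ k ∈ (S.rep (a - S.leadQuot a b * b)).support,
      S.bot a ≤ k ∧ k ≤ S.top a - 1 := by
    intro k hk
    rw [Finsupp.mem_support_iff, rep_sub, Finsupp.sub_apply] at hk
    have hkT : k ≠ S.top a := by
      rintro rfl
      exact hk (sub_eq_zero.mpr (S.rep_leadQuot_mul_top hb).symm)
    by_cases hka : S.rep a k = 0
    · rw [hka, zero_sub, neg_ne_zero, leadQuot, rep_mon_mul_apply] at hk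
      have hkb : k - (S.top a - S.top b) ∈ (S.rep b).support :=
        Finsupp.mem_support_iff.mpr (right_ne_zero_of_mul hk)
      have := hTb hkb
      have := hBb hkb
      omega
    · have hka : k ∈ (S.rep a).support := Finsupp.mem_support_iff.mpr hka
      have := hTa hka
      have := hBa hka
      omega
  have := hsupp _ (S.isGreatest_top hr).1
  have := hsupp _ (S.isLeast_bot hr).1
  omega

lemma exists_weight_sub_mul_lt {a b : L} (hb : b ≠ 0) (hab : S.weight b ≤ S.weight a) :
    ∃ q, S.weight (a - q * b) < S.weight a := by
  have ha : a ≠ 0 := by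
    rintro rfl
    simp [weight, hb] at hab
  have hdeg : lauDeg S.rep b ≤ lauDeg S.rep a := by
    have := S.lauDeg_nonneg ha
    simp only [weight, ha, hb, if_false] at hab
    omega
  exact ⟨S.leadQuot a b, S.weight_lt_of_lauDeg_lt ha (S.lauDeg_sub_leadQuot_mul_lt ha hb hdeg)⟩

lemma isLeftEuclidean_weight : IsLeftEuclidean S.weight :=
  fun _ _ hb hab => S.exists_weight_sub_mul_lt hb hab

end SkewLaurentData

theorem GL_skewLaurent_elementary_diagonal_degree_zero_general
    (K : Type*) [DivisionRing K] (σ : K ≃+* K)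
    (L : Type*) [Ring L] (ι₀ : K →+* L) (t : Lˣ)
    (hcomm : ∀ a : K, ι₀ a * t = t * ι₀ (σ a))
    (rep : L → (ℤ →₀ K))
    (hrep : ∀ x : L, x = (rep x).sum fun n a => ((t ^ n : Lˣ) : L) * ι₀ a)
    (hrep_unique : ∀ (x : L) (f : ℤ →₀ K),
      x = (f.sum fun n a => ((t ^ n : Lˣ) : L) * ι₀ a) → f = rep x)
    -- `F` is the right field of fractions of `L`
    (F : Type*) [DivisionRing F] (ι : L →+* F)
    -- `D` is the extended degree homomorphism
    (D : Abelianization Fˣ →* Multiplicative ℤ)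
    (hD : ∀ (f : L), f ≠ 0 → ∀ u : Fˣ, (u : F) = ι f →
      D (Abelianization.of u) = Multiplicative.ofAdd (lauDeg rep f))
    (m : ℕ) (P : (Matrix (Fin m) (Fin m) L)ˣ) :
    (∃ lst : List (Matrix (Fin m) (Fin m) L)ˣ,
      (∀ Q ∈ lst,
        (∃ (i j : Fin m) (c : L), i ≠ j ∧
          Q.val = 1 + Matrix.single i j c) ∨
        (∃ d : Fin m → Lˣ,
          Q.val = Matrix.diagonal fun i => (d i : L))) ∧
      P = lst.prod) ∧
    (∀ δ : (Matrix (Fin m) (Fin m) F)ˣ →* Abelianization Fˣ,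
      (∀ (i j : Fin m) (c : F), i ≠ j → ∀ Q : (Matrix (Fin m) (Fin m) F)ˣ,
        Q.val = 1 + Matrix.single i j c → δ Q = 1) →
      (∀ (d : Fin m → Fˣ) (Q : (Matrix (Fin m) (Fin m) F)ˣ),
        Q.val = Matrix.diagonal (fun i => (d i : F)) →
        δ Q = ∏ i, Abelianization.of (d i)) →
      D (δ (Units.map (ι.mapMatrix).toMonoidHom P)) = 1) := by
  let S : SkewLaurentData K L := ⟨σ, ι₀, t, hcomm, rep, hrep, hrep_unique⟩
  have := S.nontrivial
  have := S.noZeroDivisors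
  have hP : P ∈ Matrix.GE (Fin m) L := Matrix.mem_GE_of_isLeftEuclidean S.isLeftEuclidean_weight P
  refine ⟨(Matrix.exists_list_of_mem_GE hP).imp fun l hl => ⟨hl.1, hl.2.symm⟩,
    fun δ hδ_single hδ_diagonal => ?_⟩
  let χ := D.comp (δ.comp (Units.map ι.mapMatrix.toMonoidHom))
  suffices Matrix.GE (Fin m) L ≤ χ.ker from this hP
  refine (Subgroup.closure_le _).mpr fun Q hQ => ?_
  rcases hQ with ⟨i, j, c, hij, hQ⟩ | ⟨d, hQ⟩
  · refine (congrArg D (hδ_single i j (ι c) hij _ ?_)).trans (map_one D)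
    change ι.mapMatrix (Q : Matrix (Fin m) (Fin m) L) = _
    rw [hQ, map_add, map_one, RingHom.mapMatrix_apply, Matrix.map_single]
  · refine (congrArg D (hδ_diagonal (fun i => Units.map ι.toMonoidHom (d i)) _ ?_)).trans ?_
    · simp [hQ, Matrix.diagonal_map]
    · rw [map_prod]
      exact Finset.prod_eq_one fun i _ => by
        rw [hD _ (d i).ne_zero _ rfl, S.lauDeg_unit, ofAdd_zero]

/-- Every invertible matrix `P` over the skew Laurent polynomial ring `L = K[t^{±1}]`
over a skew field `K` (a Euclidean domain) is a product of elementary (transvection)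
matrices and invertible diagonal matrices over `L`; consequently, for any Dieudonné
determinant `δ` on `GL(m, F)` over the field of fractions `F` (characterized by killing
transvections and taking diagonal matrices to the product of the classes of their
entries) and any degree homomorphism `D` extending the degree of `L`, the degree of the
Dieudonné determinant of `P` is zero. -/
theorem GL_skewLaurent_elementary_diagonal_degree_zero
    (K : Type*) [DivisionRing K] (σ : K ≃+* K)
    (L : Type*) [Ring L] (ι₀ : K →+* L) (hι₀ : Function.Injective ι₀) (t : Lˣ)
    (hcomm : ∀ a : K, ι₀ a * t = t * ι₀ (σ a))
    (rep : L → (ℤ →₀ K))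
    (hrep : ∀ x : L, x = (rep x).sum fun n a => ((t ^ n : Lˣ) : L) * ι₀ a)
    (hrep_unique : ∀ (x : L) (f : ℤ →₀ K),
      x = (f.sum fun n a => ((t ^ n : Lˣ) : L) * ι₀ a) → f = rep x)
    -- `F` is the right field of fractions of `L`
    (F : Type*) [DivisionRing F] (ι : L →+* F) (hι : Function.Injective ι)
    (hfrac : ∀ x : F, ∃ f g : L, g ≠ 0 ∧ x = ι f * (ι g)⁻¹)
    -- `D` is the extended degree homomorphism
    (D : Abelianization Fˣ →* Multiplicative ℤ)
    (hD : ∀ (f : L), f ≠ 0 → ∀ u : Fˣ, (u : F) = ι f →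
      D (Abelianization.of u) = Multiplicative.ofAdd (lauDeg rep f))
    (m : ℕ) (P : (Matrix (Fin m) (Fin m) L)ˣ) :
    (∃ lst : List (Matrix (Fin m) (Fin m) L)ˣ,
      (∀ Q ∈ lst,
        (∃ (i j : Fin m) (c : L), i ≠ j ∧
          Q.val = 1 + Matrix.single i j c) ∨
        (∃ d : Fin m → Lˣ,
          Q.val = Matrix.diagonal fun i => (d i : L))) ∧
      P = lst.prod) ∧
    (∀ δ : (Matrix (Fin m) (Fin m) F)ˣ →* Abelianization Fˣ,
      (∀ (i j : Fin m) (c : F), i ≠ j → ∀ Q : (Matrix (Fin m) (Fin m) F)ˣ,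
        Q.val = 1 + Matrix.single i j c → δ Q = 1) →
      (∀ (d : Fin m → Fˣ) (Q : (Matrix (Fin m) (Fin m) F)ˣ),
        Q.val = Matrix.diagonal (fun i => (d i : F)) →
        δ Q = ∏ i, Abelianization.of (d i)) →
      D (δ (Units.map (ι.mapMatrix).toMonoidHom P)) = 1) :=
  GL_skewLaurent_elementary_diagonal_degree_zero_general K σ L ι₀ t hcomm rep hrep hrep_unique F ι D
    hD m P
end

section
/- Let K be a skew field with a group homomorphism d: (K^×)_{ab} → Z. If a matrix r ∈ GL(2g, K) satisfies an equation of the form (r̄)^T J r = J' where J, J' ∈ GL(2g, ZΓ) for a subring ZΓ ⊂ K on which d ∘ det vanishes (det being the Dieudonné determinant), and d is invariant under transpose and under the involution x ↦ x̄, then d(det r) = 0. -/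
/-- Let `K` be a skew field containing a subring `R` (the image of a group ring `ℤΓ`),
and let `D = d ∘ det : GL(2g, K) → ℤ` be the composition of the Dieudonné determinant
with a homomorphism `d : (K^×)_ab → ℤ`, so that `D` is additive on products. Suppose
`D` is invariant under the operation `A ↦ Ā^T` (`star`, induced by transpose and the
involution of `K`), and `D` vanishes on matrices with entries in `R`. If
`r ∈ GL(2g, K)` satisfies `Ā{}^T J r = J'` with `J, J' ∈ GL(2g, R)`, then `D(r) = 0`,
i.e. `d(det r) = 0`. -/
theorem degree_of_magnus_vanishes
    (K : Type*) [DivisionRing K] (g : ℕ) (R : Subring K)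
    (D : (Matrix (Fin (2 * g)) (Fin (2 * g)) K)ˣ → ℤ)
    (hD_mul : ∀ A B : (Matrix (Fin (2 * g)) (Fin (2 * g)) K)ˣ, D (A * B) = D A + D B)
    (star : (Matrix (Fin (2 * g)) (Fin (2 * g)) K)ˣ → (Matrix (Fin (2 * g)) (Fin (2 * g)) K)ˣ)
    (hstar : ∀ A, D (star A) = D A)
    (hR : ∀ A : (Matrix (Fin (2 * g)) (Fin (2 * g)) K)ˣ,
      (∀ i j, A.val i j ∈ R) → D A = 0)
    (r J J' : (Matrix (Fin (2 * g)) (Fin (2 * g)) K)ˣ)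
    (hJ : ∀ i j, J.val i j ∈ R) (hJ' : ∀ i j, J'.val i j ∈ R)
    (heq : star r * J * r = J') :
    D r = 0 := by
  have h : D r + D J + D r = D J' := by
    rw [← heq, hD_mul, hD_mul, hstar]
  rw [hR J hJ, hR J' hJ'] at h
  omega
end

section
/- Let K be a skew field and A an m × n matrix over K of rank k. Given U of size (m−k) × m with UA = 0 and rank U = m−k, and V of size n × (n−k) with AV = 0 and rank V = n−k, and subsets I ⊂ {1,…,m}, J ⊂ {1,…,n} with |I| = m−k, |J| = n−k: if U_I or V_J is not invertible, then the submatrix A_{I^c J^c} (rows indexed by I^c, columns by J^c) is not invertible. -/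
/-!
If `A_{Iᶜ Jᶜ}` is invertible and `c U_I = 0`, then `u = c U` is a left null vector of `A`
vanishing on `I`; restricted to `Iᶜ` it is a left null vector of the invertible block, so
`u = 0`, and `c = 0` because the rows of `U` are independent. Hence the square matrix `U_I`
has trivial left kernel, so it is invertible. Dually for `V_J`.
-/

open Function MulOpposite

namespace Matrix

variable {K : Type*} [DivisionRing K]

section Square

variable {ι : Type*} [Fintype ι] {M : Matrix ι ι K}

theorem vecMul_transpose_map_op (v : ι → Kᵐᵒᵖ) :
    v ᵥ* Mᵀ.map op = op ∘ (M *ᵥ (unop ∘ v)) := by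
  ext j
  simp [vecMul, mulVec, dotProduct]

variable [DecidableEq ι]

theorem isUnit_of_vecMul_injective (h : Injective M.vecMul) : IsUnit M := by
  obtain ⟨B, hBM⟩ := vecMul_surjective_iff_exists_left_inverse.mp
    (LinearMap.surjective_of_injective (f := M.vecMulLinear) h)
  exact IsUnit.of_mul_eq_one_right B hBM

theorem isUnit_of_mulVec_injective (h : Injective M.mulVec) : IsUnit M := by
  -- `mulVec` is only right-linear over a skew field; in `Kᵐᵒᵖ` the transpose makes it `vecMul`
  have hop : Injective (Mᵀ.map op).vecMul := fun v w hvw => by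
    simp only [vecMul_transpose_map_op] at hvw
    exact unop_injective.comp_left (h (op_injective.comp_left hvw))
  have hopM : IsUnit (op M) := (isUnit_of_vecMul_injective hop).map RingEquiv.mopMatrix
  exact isUnit_op.mp hopM

end Square

variable {m n ι κ ν : Type*}

theorem comp_vecMul_submatrix [Fintype m] [Fintype κ] (A : Matrix m n K) {e : κ → m}
    (he : Injective e) (f : ν → n) {u : m → K} (hu : ∀ i ∉ Set.range e, u i = 0) :
    (u ∘ e) ᵥ* A.submatrix e f = (u ᵥ* A) ∘ f := by
  ext j
  exact Fintype.sum_of_injective e he _ _ (fun i hi => by simp [hu i hi]) fun _ => rfl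

theorem submatrix_mulVec_comp [Fintype n] [Fintype ν] (A : Matrix m n K) (e : κ → m)
    {f : ν → n} (hf : Injective f) {v : n → K} (hv : ∀ j ∉ Set.range f, v j = 0) :
    A.submatrix e f *ᵥ (v ∘ f) = (A *ᵥ v) ∘ e := by
  ext i
  exact Fintype.sum_of_injective f hf _ _ (fun j hj => by simp [hv j hj]) fun _ => rfl

theorem isUnit_submatrix_of_mul_eq_zero_left [Fintype m] [Fintype ι] [DecidableEq ι]
    [Fintype κ] [DecidableEq κ] {A : Matrix m n K} {U : Matrix ι m K} (hUA : U * A = 0)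
    (hU : Injective U.vecMul) {e : ι → m} {e' : κ → m} (he' : Injective e')
    (hcover : Set.range e ∪ Set.range e' = Set.univ) {f : κ → n}
    (hA : IsUnit (A.submatrix e' f)) : IsUnit (U.submatrix id e) := by
  refine isUnit_of_vecMul_injective <|
    (injective_iff_map_eq_zero (U.submatrix id e).vecMulLinear).mpr fun c hc => ?_
  set u := c ᵥ* U
  have hu_e : u ∘ e = 0 := hc
  have hu_off : ∀ i ∉ Set.range e', u i = 0 := by
    rintro i hi
    obtain ⟨l, rfl⟩ : i ∈ Set.range e := by simpa [hi] using hcover.ge (Set.mem_univ i)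
    exact congrFun hu_e l
  have huA : u ᵥ* A = 0 := by rw [vecMul_vecMul, hUA, vecMul_zero]
  have hu_e' : u ∘ e' = 0 := vecMul_injective_of_isUnit hA <| by
    change (u ∘ e') ᵥ* _ = 0 ᵥ* _
    rw [comp_vecMul_submatrix A he' f hu_off, huA, zero_vecMul]; rfl
  have hu : u = 0 := funext fun i => by
    by_cases hi : i ∈ Set.range e'
    · obtain ⟨b, rfl⟩ := hi
      exact congrFun hu_e' b
    · exact hu_off i hi
  exact hU (hu.trans (zero_vecMul U).symm)

theorem isUnit_submatrix_of_mul_eq_zero_right [Fintype n] [Fintype ι] [DecidableEq ι]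
    [Fintype κ] [DecidableEq κ] {A : Matrix m n K} {V : Matrix n ι K} (hAV : A * V = 0)
    (hV : Injective V.mulVec) {f : ι → n} {f' : κ → n} (hf' : Injective f')
    (hcover : Set.range f ∪ Set.range f' = Set.univ) {e : κ → m}
    (hA : IsUnit (A.submatrix e f')) : IsUnit (V.submatrix f id) := by
  refine isUnit_of_mulVec_injective <|
    (injective_iff_map_eq_zero (mulVecBilin K Kᵐᵒᵖ (V.submatrix f id))).mpr fun c hc => ?_
  set v := V *ᵥ c
  have hv_f : v ∘ f = 0 := hc
  have hv_off : ∀ j ∉ Set.range f', v j = 0 := by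
    rintro j hj
    obtain ⟨l, rfl⟩ : j ∈ Set.range f := by simpa [hj] using hcover.ge (Set.mem_univ j)
    exact congrFun hv_f l
  have hAv : A *ᵥ v = 0 := by rw [mulVec_mulVec, hAV, zero_mulVec]
  have hv_f' : v ∘ f' = 0 := mulVec_injective_of_isUnit hA <| by
    change _ *ᵥ (v ∘ f') = _ *ᵥ 0
    rw [submatrix_mulVec_comp A e hf' hv_off, hAv, mulVec_zero]; rfl
  have hv : v = 0 := funext fun j => by
    by_cases hj : j ∈ Set.range f'
    · obtain ⟨b, rfl⟩ := hj
      exact congrFun hv_f' b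
    · exact hv_off j hj
  exact hV (hv.trans (mulVec_zero V).symm)

end Matrix

theorem Finset.range_coe_orderIsoOfFin {α : Type*} [LinearOrder α] (s : Finset α) {k : ℕ}
    (h : s.card = k) : Set.range (fun i => (s.orderIsoOfFin h i : α)) = s := by
  simp only [coe_orderIsoOfFin_apply, range_orderEmbOfFin]

theorem Finset.range_coe_orderIsoOfFin_union_compl {α : Type*} [LinearOrder α] [Fintype α]
    (s : Finset α) {a b : ℕ} (ha : s.card = a) (hb : sᶜ.card = b) :
    Set.range (fun i => (s.orderIsoOfFin ha i : α)) ∪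
      Set.range (fun i => (sᶜ.orderIsoOfFin hb i : α)) = Set.univ := by
  rw [range_coe_orderIsoOfFin, range_coe_orderIsoOfFin, coe_compl, Set.union_compl_self]

theorem submatrix_not_invertible_general
    (K : Type*) [DivisionRing K] (m n p q k : ℕ)
    (A : Matrix (Fin m) (Fin n) K) (U : Matrix (Fin p) (Fin m) K)
    (V : Matrix (Fin n) (Fin q) K)
    (hUA : ∀ (l : Fin p) (j : Fin n), ∑ i, U l i * A i j = 0)
    (hAV : ∀ (i : Fin m) (c : Fin q), ∑ j, A i j * V j c = 0)
    (hUind : ∀ c : Fin p → K, (∀ i : Fin m, ∑ l, c l * U l i = 0) → c = 0)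
    (hVind : ∀ c : Fin q → K, (∀ j : Fin n, ∑ l, V j l * c l = 0) → c = 0)
    (I : Finset (Fin m)) (J : Finset (Fin n)) (hI : I.card = p) (hJ : J.card = q)
    (hIc : Iᶜ.card = k) (hJc : Jᶜ.card = k)
    (h : ¬ IsUnit (U.submatrix id fun l => (I.orderIsoOfFin hI l : Fin m)) ∨
         ¬ IsUnit (V.submatrix (fun l => (J.orderIsoOfFin hJ l : Fin n)) id)) :
    ¬ IsUnit (A.submatrix (fun a : Fin k => (Iᶜ.orderIsoOfFin hIc a : Fin m))
        (fun b : Fin k => (Jᶜ.orderIsoOfFin hJc b : Fin n))) := by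
  intro hA
  rcases h with hU | hV
  · refine hU (Matrix.isUnit_submatrix_of_mul_eq_zero_left (Matrix.ext hUA) ?_
      (Subtype.val_injective.comp (Iᶜ.orderIsoOfFin hIc).injective)
      (I.range_coe_orderIsoOfFin_union_compl hI hIc) hA)
    exact (injective_iff_map_eq_zero U.vecMulLinear).mpr fun c hc => hUind c (congrFun hc)
  · refine hV (Matrix.isUnit_submatrix_of_mul_eq_zero_right (Matrix.ext hAV) ?_
      (Subtype.val_injective.comp (Jᶜ.orderIsoOfFin hJc).injective)
      (J.range_coe_orderIsoOfFin_union_compl hJ hJc) hA)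
    exact (injective_iff_map_eq_zero (Matrix.mulVecBilin K Kᵐᵒᵖ V)).mpr
      fun c hc => hVind c (congrFun hc)

/-- Lemma 5.2 (1): Let `K` be a skew field and `A` an `m × n` matrix over `K` of rank
`k`, with `U` a `(m−k) × m` matrix of full row rank with `UA = 0` (its rows spanning the
left kernel of `A`) and `V` an `n × (n−k)` matrix of full column rank with `AV = 0` (its
columns spanning the right kernel of `A`). For index sets `I ⊂ {1,…,m}`, `J ⊂ {1,…,n}`
with `|I| = m−k`, `|J| = n−k`: if `U_I` or `V_J` is not invertible, then the submatrix
`A_{I^c J^c}` is not invertible. Here `p = m − k` and `q = n − k`. -/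
theorem submatrix_not_invertible
    (K : Type*) [DivisionRing K] (m n p q k : ℕ)
    (A : Matrix (Fin m) (Fin n) K) (U : Matrix (Fin p) (Fin m) K)
    (V : Matrix (Fin n) (Fin q) K)
    (hUA : ∀ (l : Fin p) (j : Fin n), ∑ i, U l i * A i j = 0)
    (hAV : ∀ (i : Fin m) (c : Fin q), ∑ j, A i j * V j c = 0)
    (hUind : ∀ c : Fin p → K, (∀ i : Fin m, ∑ l, c l * U l i = 0) → c = 0)
    (hVind : ∀ c : Fin q → K, (∀ j : Fin n, ∑ l, V j l * c l = 0) → c = 0)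
    (hUspan : ∀ u : Fin m → K, (∀ j : Fin n, ∑ i, u i * A i j = 0) →
      ∃ c : Fin p → K, ∀ i, u i = ∑ l, c l * U l i)
    (hVspan : ∀ v : Fin n → K, (∀ i : Fin m, ∑ j, A i j * v j = 0) →
      ∃ c : Fin q → K, ∀ j, v j = ∑ l, V j l * c l)
    (I : Finset (Fin m)) (J : Finset (Fin n)) (hI : I.card = p) (hJ : J.card = q)
    (hIc : Iᶜ.card = k) (hJc : Jᶜ.card = k)
    (h : ¬ IsUnit (U.submatrix id fun l => (I.orderIsoOfFin hI l : Fin m)) ∨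
         ¬ IsUnit (V.submatrix (fun l => (J.orderIsoOfFin hJ l : Fin n)) id)) :
    ¬ IsUnit (A.submatrix (fun a : Fin k => (Iᶜ.orderIsoOfFin hIc a : Fin m))
        (fun b : Fin k => (Jᶜ.orderIsoOfFin hJc b : Fin n))) :=
  submatrix_not_invertible_general K m n p q k A U V hUA hAV hUind hVind I J hI hJ hIc hJc h
end
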